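/- arXiv:0908.4566 — 3 statements merged into one kernel-verified Lean document; each statement's English description precedes it below -/
import Mathlib

section
/- Let P be a finite-dimensional local K-algebra with maximal ideal I, Iᴺ = 0, residue field K. Let ℰ be a sheaf of P-modules on a second-countable topological space X locally isomorphic to P ⊗ E where E := ℰ/Iℰ, compatibly with the projection #′: P → K. If d := dim_K E(X) < ∞, then d ≤ dim_K ℰ(X) ≤ d · dim_K P. -/
open TopologicalSpace TensorProduct

section AuxStmt3

variable {K P : Type} [Field K] [CommRing P] [Algebra K P]
variable {M M' : Type} [AddCommGroup M] [Module K M] [AddCommGroup M'] [Module K M']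

/-- coordinate map `p ⊗ v ↦ φ p • v`. -/
noncomputable def piPhi (M : Type) [AddCommGroup M] [Module K M] (φ : P →ₗ[K] K) :
    TensorProduct K P M →ₗ[K] M :=
  TensorProduct.lift ((LinearMap.lsmul K M).comp φ)

@[simp] lemma piPhi_tmul (φ : P →ₗ[K] K) (p : P) (v : M) :
    piPhi M φ (p ⊗ₜ[K] v) = φ p • v := by
  simp [piPhi]

/-- The `K`-submodule `N ⊗ M ⊆ P ⊗ M` for an ideal `N`. -/
def auxJ (K : Type) [Field K] {P : Type} [CommRing P] [Algebra K P]
    (M : Type) [AddCommGroup M] [Module K M] (N : Ideal P) :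
    Submodule K (TensorProduct K P M) :=
  Submodule.span K {x | ∃ p ∈ N, ∃ v : M, x = p ⊗ₜ[K] v}

lemma tmul_mem_auxJ {N : Ideal P} {p : P} (hp : p ∈ N) (v : M) :
    p ⊗ₜ[K] v ∈ auxJ K M N :=
  Submodule.subset_span ⟨p, hp, v, rfl⟩

lemma auxJ_mono {N N' : Ideal P} (h : N ≤ N') : auxJ K M N ≤ auxJ K (P := P) M N' := by
  refine Submodule.span_mono ?_
  rintro x ⟨p, hp, v, rfl⟩
  exact ⟨p, h hp, v, rfl⟩

lemma piPhi_eq_zero_of_mem_auxJ {N : Ideal P} (φ : P →ₗ[K] K)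
    (hφ : ∀ p ∈ N, φ p = 0) {u : TensorProduct K P M} (hu : u ∈ auxJ K M N) :
    piPhi M φ u = 0 := by
  have h : auxJ K M N ≤ LinearMap.ker (piPhi M φ) := by
    rw [auxJ, Submodule.span_le]
    rintro x ⟨p, hp, v, rfl⟩
    simp [LinearMap.mem_ker, hφ p hp]
  simpa using h hu

lemma lTensor_mem_auxJ {N : Ideal P} (f : M →ₗ[K] M') {u : TensorProduct K P M}
    (hu : u ∈ auxJ K M N) :
    LinearMap.lTensor P f u ∈ auxJ K M' N := by
  have h : auxJ K M N ≤ (auxJ K M' N).comap (LinearMap.lTensor P f) := by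
    rw [auxJ, Submodule.span_le]
    rintro x ⟨p, hp, v, rfl⟩
    simpa using tmul_mem_auxJ (K := K) hp (f v)
  exact h hu

lemma smul_mem_auxJ {N₁ N₂ : Ideal P} {p : P} (hp : p ∈ N₁) {u : TensorProduct K P M}
    (hu : u ∈ auxJ K M N₂) : p • u ∈ auxJ K M (N₁ * N₂) := by
  induction hu using Submodule.span_induction with
  | mem x hx =>
    obtain ⟨q, hq, v, rfl⟩ := hx
    rw [TensorProduct.smul_tmul', smul_eq_mul]
    exact tmul_mem_auxJ (Ideal.mul_mem_mul hp hq) v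
  | zero => simpa using (auxJ K M (N₁ * N₂)).zero_mem
  | add x y hx hy ihx ihy => rw [smul_add]; exact add_mem ihx ihy
  | smul c x hx ih =>
    rw [← algebraMap_smul P c x, smul_smul, mul_comm p (algebraMap K P c), ← smul_smul,
      algebraMap_smul]
    exact Submodule.smul_mem _ c ih

lemma sub_tmul_piPhi_mem_auxJ (I : Ideal P) (ρ : P →ₐ[K] K)
    (hρ : RingHom.ker (ρ : P →+* K) = I) (t : TensorProduct K P M) :
    t - (1 : P) ⊗ₜ[K] (piPhi M ρ.toLinearMap t) ∈ auxJ K M I := by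
  induction t using TensorProduct.induction_on with
  | zero => simpa using (auxJ K M I).zero_mem
  | tmul p v =>
    have h1 : (1 : P) ⊗ₜ[K] (piPhi M ρ.toLinearMap (p ⊗ₜ[K] v))
        = (algebraMap K P (ρ p)) ⊗ₜ[K] v := by
      rw [piPhi_tmul, TensorProduct.tmul_smul, TensorProduct.smul_tmul',
        Algebra.algebraMap_eq_smul_one]
      rfl
    rw [h1, ← TensorProduct.sub_tmul]
    refine tmul_mem_auxJ ?_ v
    rw [← hρ, RingHom.mem_ker]
    simp
  | add t1 t2 ih1 ih2 =>
    have h : (t1 + t2) - (1 : P) ⊗ₜ[K] (piPhi M ρ.toLinearMap (t1 + t2))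
        = (t1 - (1 : P) ⊗ₜ[K] (piPhi M ρ.toLinearMap t1))
          + (t2 - (1 : P) ⊗ₜ[K] (piPhi M ρ.toLinearMap t2)) := by
      rw [map_add, TensorProduct.tmul_add]; abel
    rw [h]; exact add_mem ih1 ih2

lemma transition_mem_auxJ (I N : Ideal P) (ρ : P →ₐ[K] K)
    (hρ : RingHom.ker (ρ : P →+* K) = I)
    (g : TensorProduct K P M →ₗ[P] TensorProduct K P M)
    (hg : ∀ t, piPhi M ρ.toLinearMap (g t) = piPhi M ρ.toLinearMap t)
    {u : TensorProduct K P M} (hu : u ∈ auxJ K M N) :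
    g u - u ∈ auxJ K M (N * I) := by
  induction hu using Submodule.span_induction with
  | mem x hx =>
    obtain ⟨p, hp, v, rfl⟩ := hx
    have hw : g ((1 : P) ⊗ₜ[K] v) - (1 : P) ⊗ₜ[K] v ∈ auxJ K M I := by
      have h0 : piPhi M ρ.toLinearMap (g ((1 : P) ⊗ₜ[K] v) - (1 : P) ⊗ₜ[K] v) = 0 := by
        rw [map_sub, hg, sub_self]
      have := sub_tmul_piPhi_mem_auxJ (M := M) I ρ hρ
        (g ((1 : P) ⊗ₜ[K] v) - (1 : P) ⊗ₜ[K] v)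
      rw [h0, TensorProduct.tmul_zero, sub_zero] at this
      exact this
    have hrw : p ⊗ₜ[K] v = p • ((1 : P) ⊗ₜ[K] v) := by
      rw [TensorProduct.smul_tmul', smul_eq_mul, mul_one]
    rw [hrw, map_smul]
    have := smul_mem_auxJ hp hw
    rwa [smul_sub] at this
  | zero => simpa using (auxJ K M (N * I)).zero_mem
  | add x y hx hy ihx ihy =>
    have h : g (x + y) - (x + y) = (g x - x) + (g y - y) := by rw [map_add]; abel
    rw [h]; exact add_mem ihx ihy
  | smul c x hx ih =>
    rw [LinearMap.map_smul_of_tower]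
    have := Submodule.smul_mem _ c ih
    rwa [smul_sub] at this

lemma piPhi_lTensor (φ : P →ₗ[K] K) (f : M →ₗ[K] M') (t : TensorProduct K P M) :
    piPhi M' φ (LinearMap.lTensor P f t) = f (piPhi M φ t) := by
  induction t using TensorProduct.induction_on with
  | zero => simp
  | tmul p v => simp
  | add a b iha ihb => simp [iha, ihb]

lemma mem_auxJ_of_coords_zero {r : ℕ} (a : Fin r → P) (φ : Fin r → (P →ₗ[K] K))
    (N N' : Ideal P) (ha : ∀ j, a j ∈ N)
    (hδ : ∀ i j, φ i (a j) = if i = j then 1 else 0)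
    (hker : ∀ y ∈ N, (∀ j, φ j y = 0) → y ∈ N')
    {u : TensorProduct K P M} (hu : u ∈ auxJ K M N)
    (h0 : ∀ j, piPhi M (φ j) u = 0) : u ∈ auxJ K M N' := by
  set D : TensorProduct K P M →ₗ[K] TensorProduct K P M :=
    LinearMap.id - ∑ j, (TensorProduct.mk K P M (a j)).comp (piPhi M (φ j)) with hD
  have hDu : D u = u := by
    simp [hD, LinearMap.sub_apply, LinearMap.sum_apply, h0]
  have hmain : D u ∈ auxJ K M N' := by
    clear hDu h0
    induction hu using Submodule.span_induction with
    | mem x hx =>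
      obtain ⟨p, hp, v, rfl⟩ := hx
      have hcomp : D (p ⊗ₜ[K] v) = (p - ∑ j, φ j p • a j) ⊗ₜ[K] v := by
        rw [TensorProduct.sub_tmul, TensorProduct.sum_tmul]
        simp only [hD, LinearMap.sub_apply, LinearMap.id_apply, LinearMap.sum_apply,
          LinearMap.comp_apply, piPhi_tmul, TensorProduct.mk_apply]
        congr 1
        refine Finset.sum_congr rfl fun j _ => ?_
        rw [TensorProduct.smul_tmul, TensorProduct.tmul_smul]
      rw [hcomp]
      refine tmul_mem_auxJ (hker _ ?_ ?_) v
      · refine Submodule.sub_mem _ hp (Submodule.sum_mem _ fun j _ => ?_)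
        rw [← algebraMap_smul P (φ j p) (a j), smul_eq_mul]
        exact Ideal.mul_mem_left _ _ (ha j)
      · intro i
        rw [map_sub, map_sum]
        have : ∀ j ∈ Finset.univ, φ i (φ j p • a j) = if i = j then φ j p else 0 := by
          intro j _
          rw [map_smul, hδ i j, smul_eq_mul]
          by_cases h : i = j <;> simp [h]
        rw [Finset.sum_congr rfl this, Finset.sum_ite_eq]
        simp
    | zero => simpa using (auxJ K M N').zero_mem
    | add x y hx hy ihx ihy => rw [map_add]; exact add_mem ihx ihy
    | smul c x hx ih => rw [map_smul]; exact Submodule.smul_mem _ c ih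
  rwa [hDu] at hmain

lemma auxJ_top : auxJ K M (⊤ : Ideal P) = ⊤ := by
  rw [eq_top_iff, ← TensorProduct.span_tmul_eq_top K P M, Submodule.span_le]
  rintro x ⟨m, n, rfl⟩
  exact tmul_mem_auxJ Submodule.mem_top n

lemma auxJ_bot : auxJ K M (⊥ : Ideal P) = ⊥ := by
  rw [eq_bot_iff, auxJ, Submodule.span_le]
  rintro x ⟨p, hp, v, rfl⟩
  rw [Ideal.mem_bot] at hp
  simp [hp]

end AuxStmt3
lemma exists_adapted_coords {K V : Type} [Field K] [AddCommGroup V] [Module K V]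
    [FiniteDimensional K V] (S0 S1 : Submodule K V) (hle : S1 ≤ S0) :
    ∃ (r : ℕ) (a : Fin r → V) (φ : Fin r → (V →ₗ[K] K)),
      Module.finrank K S0 = r + Module.finrank K S1 ∧
      (∀ j, a j ∈ S0) ∧
      (∀ i j, φ i (a j) = if i = j then 1 else 0) ∧
      (∀ j, ∀ p ∈ S1, φ j p = 0) ∧
      (∀ y ∈ S0, (∀ j, φ j y = 0) → y ∈ S1) := by
  classical
  obtain ⟨C, hC⟩ := Submodule.exists_isCompl (Submodule.map S1.mkQ S0)
  set T := Submodule.map S1.mkQ S0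
  set b := Module.finBasis K ↥T with hb
  set r := Module.finrank K ↥T with hr
  set pr : (V ⧸ S1) →ₗ[K] ↥T := T.projectionOnto C hC with hpr
  have hav : ∀ j : Fin r, ∃ y, y ∈ S0 ∧ S1.mkQ y = (b j : V ⧸ S1) :=
    fun j => Submodule.mem_map.mp (b j).2
  choose av havS0 havmk using hav
  refine ⟨r, av, fun j => (b.coord j).comp (pr.comp S1.mkQ), ?_, havS0, ?_, ?_, ?_⟩
  · -- rank identity
    have hrn := LinearMap.finrank_range_add_finrank_ker (S1.mkQ.comp S0.subtype)
    have hrange : LinearMap.range (S1.mkQ.comp S0.subtype) = T := by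
      rw [LinearMap.range_comp, Submodule.range_subtype]
    have hker : LinearMap.ker (S1.mkQ.comp S0.subtype) = Submodule.comap S0.subtype S1 := by
      rw [LinearMap.ker_comp, Submodule.ker_mkQ]
    rw [hrange, hker, (Submodule.comapSubtypeEquivOfLe hle).finrank_eq] at hrn
    exact hrn.symm
  · intro i j
    simp only [LinearMap.comp_apply]
    rw [havmk, hpr, Submodule.projectionOnto_apply_left, Module.Basis.coord_apply,
      Module.Basis.repr_self, Finsupp.single_apply]
    by_cases h : i = j
    · simp [h]
    · simp [h, Ne.symm h]
  · intro j p hp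
    have hz : S1.mkQ p = 0 := by
      rw [Submodule.mkQ_apply, Submodule.Quotient.mk_eq_zero]
      exact hp
    simp only [LinearMap.comp_apply]
    rw [hz, map_zero, map_zero]
  · intro y hy h0
    have hmem : S1.mkQ y ∈ T := Submodule.mem_map_of_mem hy
    have hx : pr (S1.mkQ y) = ⟨S1.mkQ y, hmem⟩ :=
      Submodule.projectionOnto_apply_left hC ⟨S1.mkQ y, hmem⟩
    have hzero : (⟨S1.mkQ y, hmem⟩ : ↥T) = 0 := by
      rw [← Module.Basis.forall_coord_eq_zero_iff b]
      intro j
      have h1 := h0 j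
      simp only [LinearMap.comp_apply] at h1
      rw [hx] at h1
      exact h1
    have h2 : S1.mkQ y = 0 := congrArg Subtype.val hzero
    rwa [Submodule.mkQ_apply, Submodule.Quotient.mk_eq_zero] at h2
/-- Lemma 4.1 (dimension bounds) of the paper: `P` a finite-dimensional local
`K`-algebra with unique maximal ideal `I`, `I^N = 0`, with residue projection
`#' = ρ : P → P/I ≅ K`; `ℰ` a sheaf of `P`-modules on a second-countable space `X`
locally isomorphic to `P ⊗ E` for the sheaf `E := ℰ/Iℰ` of `K`-vector spaces,
compatibly with `#'`.  If `d := dim_K E(X) < ∞` then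
`d ≤ dim_K ℰ(X) ≤ d · dim_K P`. -/
theorem stmt_3 (K : Type) [Field K]
    (P : Type) [CommRing P] [Algebra K P] [FiniteDimensional K P]
    (I : Ideal P) (hImax : I.IsMaximal) (hIuniq : ∀ J : Ideal P, J.IsMaximal → J = I)
    (N : ℕ) (hIN : I ^ N = ⊥)
    (ρ : P →ₐ[K] K) (hρ : RingHom.ker (ρ : P →+* K) = I)
    (X : Type) [TopologicalSpace X] [SecondCountableTopology X]
    -- the sheaf ℰ of P-modules on X
    (ℰ : Opens X → Type) [∀ U, AddCommGroup (ℰ U)] [∀ U, Module P (ℰ U)]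
    [∀ U, Module K (ℰ U)] [∀ U, IsScalarTower K P (ℰ U)]
    (res : ∀ U V : Opens X, V ≤ U → (ℰ U →ₗ[P] ℰ V))
    (res_refl : ∀ (U : Opens X) (s : ℰ U), res U U le_rfl s = s)
    (res_comp : ∀ (U V W : Opens X) (hVU : V ≤ U) (hWV : W ≤ V) (s : ℰ U),
      res V W hWV (res U V hVU s) = res U W (le_trans hWV hVU) s)
    (sep : ∀ (ι : Type) (U : ι → Opens X) (s t : ℰ (iSup U)),
      (∀ i, res (iSup U) (U i) (le_iSup U i) s = res (iSup U) (U i) (le_iSup U i) t) →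
      s = t)
    (glue : ∀ (ι : Type) (U : ι → Opens X) (s : ∀ i, ℰ (U i)),
      (∀ i j, res (U i) (U i ⊓ U j) inf_le_left (s i)
            = res (U j) (U i ⊓ U j) inf_le_right (s j)) →
      ∃ g : ℰ (iSup U), ∀ i, res (iSup U) (U i) (le_iSup U i) g = s i)
    -- the quotient sheaf E = ℰ/Iℰ of K-vector spaces on X
    (E : Opens X → Type) [∀ U, AddCommGroup (E U)] [∀ U, Module K (E U)]
    (resE : ∀ U V : Opens X, V ≤ U → (E U →ₗ[K] E V))
    (resE_refl : ∀ (U : Opens X) (s : E U), resE U U le_rfl s = s)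
    (resE_comp : ∀ (U V W : Opens X) (hVU : V ≤ U) (hWV : W ≤ V) (s : E U),
      resE V W hWV (resE U V hVU s) = resE U W (le_trans hWV hVU) s)
    (sepE : ∀ (ι : Type) (U : ι → Opens X) (s t : E (iSup U)),
      (∀ i, resE (iSup U) (U i) (le_iSup U i) s = resE (iSup U) (U i) (le_iSup U i) t) →
      s = t)
    (glueE : ∀ (ι : Type) (U : ι → Opens X) (s : ∀ i, E (U i)),
      (∀ i j, resE (U i) (U i ⊓ U j) inf_le_left (s i)
            = resE (U j) (U i ⊓ U j) inf_le_right (s j)) →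
      ∃ g : E (iSup U), ∀ i, resE (iSup U) (U i) (le_iSup U i) g = s i)
    -- the canonical projection #' : ℰ → E
    (proj : ∀ U : Opens X, ℰ U →ₗ[K] E U)
    (proj_res : ∀ (U V : Opens X) (h : V ≤ U) (s : ℰ U),
      proj V (res U V h s) = resE U V h (proj U s))
    -- local triviality: ℰ ≅ P ⊗ E locally, compatibly with #' and restrictions
    (htriv : ∀ x : X, ∃ U : Opens X, x ∈ U ∧
      ∃ e : ∀ V : Opens X, V ≤ U → (ℰ V ≃ₗ[P] TensorProduct K P (E V)),
        (∀ (V W : Opens X) (hWV : W ≤ V) (hVU : V ≤ U) (s : ℰ V),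
          e W (le_trans hWV hVU) (res V W hWV s)
            = LinearMap.lTensor P (resE V W hWV) (e V hVU s)) ∧
        (∀ (V : Opens X) (hVU : V ≤ U) (s : ℰ V),
          proj V s
            = TensorProduct.lift ((LinearMap.lsmul K (E V)).comp ρ.toLinearMap)
                (e V hVU s)))
    (hfin : FiniteDimensional K (E ⊤)) :
    (Module.finrank K (E ⊤) : Cardinal) ≤ Module.rank K (ℰ ⊤) ∧
      Module.rank K (ℰ ⊤)
        ≤ (Module.finrank K (E ⊤) : Cardinal) * (Module.finrank K P : Cardinal) := by
  classical
  have hPnt : Nontrivial P := by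
    by_contra h
    rw [not_nontrivial_iff_subsingleton] at h
    exact hImax.ne_top (Subsingleton.elim _ _)
  choose U hmemU e he_res he_proj using htriv
  have hUtop : iSup U = (⊤ : Opens X) := by
    refine top_unique fun x _ => ?_
    exact Opens.mem_iSup.mpr ⟨x, hmemU x⟩
  rw [← hUtop] at hfin ⊢
  haveI := hfin
  -- `proj` in terms of `piPhi`
  have he_proj' : ∀ (x : X) (V : Opens X) (hV : V ≤ U x) (s : ℰ V),
      proj V s = piPhi (E V) ρ.toLinearMap (e x V hV s) := he_proj
  -- restriction formula for sections of `iSup U`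
  have H1 : ∀ (x : X) (V : Opens X) (hV : V ≤ U x) (s : ℰ (iSup U)),
      e x V hV (res (iSup U) V (le_trans hV (le_iSup U x)) s)
        = LinearMap.lTensor P (resE (U x) V hV)
            (e x (U x) le_rfl (res (iSup U) (U x) (le_iSup U x) s)) := by
    intro x V hV s
    rw [← res_comp (iSup U) (U x) V (le_iSup U x) hV s]
    exact he_res x (U x) V hV le_rfl (res (iSup U) (U x) (le_iSup U x) s)
  -- transition maps shift the filtration
  have H3 : ∀ (x y : X) (V : Opens X) (hVx : V ≤ U x) (hVy : V ≤ U y) (s : ℰ V) (k : ℕ),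
      e y V hVy s ∈ auxJ K (E V) (I ^ k) →
      e x V hVx s - e y V hVy s ∈ auxJ K (E V) (I ^ (k + 1)) := by
    intro x y V hVx hVy s k hs
    have hg : ∀ t, piPhi (E V) ρ.toLinearMap
        (((e x V hVx).toLinearMap ∘ₗ (e y V hVy).symm.toLinearMap) t)
        = piPhi (E V) ρ.toLinearMap t := by
      intro t
      have h1 := he_proj' x V hVx ((e y V hVy).symm t)
      have h2 := he_proj' y V hVy ((e y V hVy).symm t)
      rw [LinearEquiv.apply_symm_apply] at h2
      simp only [LinearMap.comp_apply, LinearEquiv.coe_coe, ← h1, h2]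
    have := transition_mem_auxJ I (I ^ k) ρ hρ _ hg hs
    rw [← pow_succ] at this
    simpa using this
  -- the filtration submodules
  set Fsub : ℕ → Submodule K (ℰ (iSup U)) := fun k => ⨅ x : X,
    Submodule.comap (((e x (U x) le_rfl).toLinearMap.restrictScalars K).comp
      ((res (iSup U) (U x) (le_iSup U x)).restrictScalars K))
      (auxJ K (E (U x)) (I ^ k)) with hFsub
  have hFmem : ∀ (k : ℕ) (s : ℰ (iSup U)), s ∈ Fsub k ↔ ∀ x : X,
      e x (U x) le_rfl (res (iSup U) (U x) (le_iSup U x) s) ∈ auxJ K (E (U x)) (I ^ k) := by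
    intro k s
    simp [hFsub, Submodule.mem_iInf, Submodule.mem_comap]
  have hF0 : Fsub 0 = ⊤ := by
    rw [eq_top_iff]
    intro s _
    rw [hFmem]
    intro x
    rw [pow_zero, Ideal.one_eq_top, auxJ_top]
    exact Submodule.mem_top
  have hFN : Fsub N = ⊥ := by
    rw [eq_bot_iff]
    intro s hs
    rw [hFmem] at hs
    rw [Submodule.mem_bot]
    refine sep X U s 0 fun x => ?_
    have := hs x
    rw [hIN, auxJ_bot, Submodule.mem_bot] at this
    rw [map_zero]
    exact (e x (U x) le_rfl).map_eq_zero_iff.mp this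
  have hFle : ∀ k, Fsub (k + 1) ≤ Fsub k := by
    intro k s hs
    rw [hFmem] at hs ⊢
    intro x
    refine auxJ_mono ?_ (hs x)
    exact Ideal.pow_le_pow_right (Nat.le_succ k)
  -- ===== lower bound =====
  have hex : ∃ n, I ^ n = ⊥ := ⟨N, hIN⟩
  have hk₀ : I ^ (Nat.find hex) = ⊥ := Nat.find_spec hex
  have hk₀ne : Nat.find hex ≠ 0 := by
    intro h0
    rw [h0, pow_zero, Ideal.one_eq_top] at hk₀
    have h1 : (1 : P) ∈ (⊥ : Ideal P) := hk₀ ▸ Submodule.mem_top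
    rw [Submodule.mem_bot] at h1
    exact one_ne_zero h1
  obtain ⟨k₁, hk₁⟩ := Nat.exists_eq_succ_of_ne_zero hk₀ne
  have hne : I ^ k₁ ≠ ⊥ := Nat.find_min hex (by omega)
  rw [Submodule.ne_bot_iff] at hne
  obtain ⟨a, haI, ha0⟩ := hne
  have haIzero : ∀ b ∈ I, a * b = 0 := by
    intro b hb
    have h : a * b ∈ I ^ (k₁ + 1) := by
      rw [pow_succ]; exact Ideal.mul_mem_mul haI hb
    have hbot : I ^ (k₁ + 1) = ⊥ := by rw [← Nat.succ_eq_add_one, ← hk₁]; exact hk₀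
    rw [hbot, Submodule.mem_bot] at h
    exact h
  have hakill : ∀ (V : Opens X) (u : TensorProduct K P (E V)),
      u ∈ auxJ K (E V) I → a • u = 0 := by
    intro V u hu
    induction hu using Submodule.span_induction with
    | mem x hx =>
      obtain ⟨p, hp, v, rfl⟩ := hx
      rw [TensorProduct.smul_tmul', smul_eq_mul, haIzero p hp, TensorProduct.zero_tmul]
    | zero => rw [smul_zero]
    | add x y hx hy ihx ihy => rw [smul_add, ihx, ihy, add_zero]
    | smul c x hx ih =>
      rw [← algebraMap_smul P c x, smul_smul, mul_comm a (algebraMap K P c), ← smul_smul,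
        algebraMap_smul, ih, smul_zero]
  have hasmul : ∀ (V : Opens X) (t : TensorProduct K P (E V)),
      a • t = a ⊗ₜ[K] (piPhi (E V) ρ.toLinearMap t) := by
    intro V t
    have h := hakill V _ (sub_tmul_piPhi_mem_auxJ I ρ hρ t)
    rw [smul_sub, sub_eq_zero] at h
    rw [h, TensorProduct.smul_tmul', smul_eq_mul, mul_one]
  have hch : ∀ (x y : X) (W : Opens X) (hWx : W ≤ U x) (hWy : W ≤ U y) (w : E W),
      (e x W hWx).symm (a ⊗ₜ[K] w) = (e y W hWy).symm (a ⊗ₜ[K] w) := by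
    intro x y W hWx hWy w
    apply (e x W hWx).injective
    rw [LinearEquiv.apply_symm_apply]
    have h1 : a ⊗ₜ[K] w = a • ((1 : P) ⊗ₜ[K] w) := by
      rw [TensorProduct.smul_tmul', smul_eq_mul, mul_one]
    have h2 : piPhi (E W) ρ.toLinearMap (e x W hWx ((e y W hWy).symm ((1:P) ⊗ₜ[K] w)))
        = piPhi (E W) ρ.toLinearMap ((1:P) ⊗ₜ[K] w) := by
      rw [← he_proj' x W hWx, he_proj' y W hWy, LinearEquiv.apply_symm_apply]
    rw [h1, map_smul, map_smul, hasmul, hasmul, h2]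
  have hLcompat : ∀ (t : E (iSup U)) (x y : X),
      res (U x) (U x ⊓ U y) inf_le_left
        ((e x (U x) le_rfl).symm (a ⊗ₜ[K] resE (iSup U) (U x) (le_iSup U x) t))
      = res (U y) (U x ⊓ U y) inf_le_right
        ((e y (U y) le_rfl).symm (a ⊗ₜ[K] resE (iSup U) (U y) (le_iSup U y) t)) := by
    intro t x y
    have key : ∀ (z : X) (hWz : U x ⊓ U y ≤ U z),
        res (U z) (U x ⊓ U y) hWz
          ((e z (U z) le_rfl).symm (a ⊗ₜ[K] resE (iSup U) (U z) (le_iSup U z) t))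
        = (e z (U x ⊓ U y) hWz).symm
            (a ⊗ₜ[K] resE (iSup U) (U x ⊓ U y) (le_trans hWz (le_iSup U z)) t) := by
      intro z hWz
      apply (e z (U x ⊓ U y) hWz).injective
      rw [LinearEquiv.apply_symm_apply]
      refine (he_res z (U z) (U x ⊓ U y) hWz le_rfl
        ((e z (U z) le_rfl).symm (a ⊗ₜ[K] resE (iSup U) (U z) (le_iSup U z) t))).trans ?_
      rw [LinearEquiv.apply_symm_apply, LinearMap.lTensor_tmul, resE_comp]
    rw [key x inf_le_left, key y inf_le_right]
    exact hch x y _ inf_le_left inf_le_right _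
  have hνex : ∀ t : E (iSup U), ∃ g : ℰ (iSup U), ∀ x,
      res (iSup U) (U x) (le_iSup U x) g
        = (e x (U x) le_rfl).symm (a ⊗ₜ[K] resE (iSup U) (U x) (le_iSup U x) t) :=
    fun t => glue X U _ (hLcompat t)
  choose νf hνf using hνex
  have hsymm_smul : ∀ (x : X) (c : K) (u : TensorProduct K P (E (U x))),
      (e x (U x) le_rfl).symm (c • u) = c • (e x (U x) le_rfl).symm u :=
    fun x c u => ((e x (U x) le_rfl).symm.toLinearMap).map_smul_of_tower c u
  have hνadd : ∀ t t', νf (t + t') = νf t + νf t' := by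
    intro t t'
    refine sep X U _ _ fun x => ?_
    rw [map_add, hνf, hνf, hνf, map_add, TensorProduct.tmul_add, map_add]
  have hνsmul : ∀ (c : K) (t), νf (c • t) = c • νf t := by
    intro c t
    refine sep X U _ _ fun x => ?_
    rw [hνf, (res (iSup U) (U x) (le_iSup U x)).map_smul_of_tower, hνf, map_smul,
      TensorProduct.tmul_smul, hsymm_smul]
  obtain ⟨f, hf⟩ : ∃ f : P →ₗ[K] K, f a ≠ 0 := by
    by_contra h
    push_neg at h
    exact ha0 ((Module.forall_dual_apply_eq_zero_iff K a).mp h)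
  have hφa1 : ((f a)⁻¹ • f) a = 1 := by
    simp [inv_mul_cancel₀ hf]
  have hνinj : Function.Injective νf := by
    intro t t' h
    refine sepE X U t t' fun x => ?_
    have hx := congrArg (res (iSup U) (U x) (le_iSup U x)) h
    rw [hνf, hνf] at hx
    have h1 := (e x (U x) le_rfl).symm.injective hx
    have h2 := congrArg (piPhi (E (U x)) ((f a)⁻¹ • f)) h1
    rwa [piPhi_tmul, piPhi_tmul, hφa1, one_smul, one_smul] at h2
  have lower : (Module.finrank K (E (iSup U)) : Cardinal) ≤ Module.rank K (ℰ (iSup U)) := by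
    rw [Module.finrank_eq_rank]
    exact LinearMap.rank_le_of_injective
      { toFun := νf, map_add' := hνadd, map_smul' := hνsmul } hνinj
  refine ⟨lower, ?_⟩
  -- ===== upper bound =====
  have he_smulK : ∀ (x : X) (c : K) (u : ℰ (U x)),
      e x (U x) le_rfl (c • u) = c • e x (U x) le_rfl u :=
    fun x c u => ((e x (U x) le_rfl).toLinearMap).map_smul_of_tower c u
  have step : ∀ k : ℕ, ∃ r : ℕ,
      Module.finrank K ((I ^ k).restrictScalars K)
        = r + Module.finrank K ((I ^ (k + 1)).restrictScalars K) ∧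
      Module.rank K ↥(Fsub k)
        ≤ ((r * Module.finrank K (E (iSup U)) : ℕ) : Cardinal)
          + Module.rank K ↥(Fsub (k + 1)) := by
    intro k
    have hle : (I ^ (k + 1)).restrictScalars K ≤ (I ^ k).restrictScalars K :=
      fun y hy => Ideal.pow_le_pow_right (Nat.le_succ k) hy
    obtain ⟨r, av, φ, hrankid, havSk, hδ, hφzero, hkerφ⟩ :=
      exists_adapted_coords ((I ^ k).restrictScalars K) ((I ^ (k + 1)).restrictScalars K) hle
    have hφzero' : ∀ j, ∀ p ∈ I ^ (k + 1), φ j p = 0 := hφzero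
    have hkerφ' : ∀ y ∈ I ^ k, (∀ j, φ j y = 0) → y ∈ I ^ (k + 1) := hkerφ
    -- glued coordinate sections
    have hgrex : ∀ (s : ℰ (iSup U)), s ∈ Fsub k → ∀ j : Fin r, ∃ g : E (iSup U), ∀ x,
        resE (iSup U) (U x) (le_iSup U x) g
          = piPhi (E (U x)) (φ j) (e x (U x) le_rfl (res (iSup U) (U x) (le_iSup U x) s)) := by
      intro s hs j
      refine glueE X U _ fun x y => ?_
      have hx : ∀ (z : X) (hWz : U x ⊓ U y ≤ U z),
          resE (U z) (U x ⊓ U y) hWz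
            (piPhi (E (U z)) (φ j) (e z (U z) le_rfl (res (iSup U) (U z) (le_iSup U z) s)))
          = piPhi (E (U x ⊓ U y)) (φ j)
              (e z (U x ⊓ U y) hWz (res (iSup U) (U x ⊓ U y) (le_trans hWz (le_iSup U z)) s)) := by
        intro z hWz
        rw [← piPhi_lTensor, ← H1 z (U x ⊓ U y) hWz s]
      rw [hx x inf_le_left, hx y inf_le_right]
      have hmemy : e y (U x ⊓ U y) inf_le_right
          (res (iSup U) (U x ⊓ U y) (le_trans inf_le_right (le_iSup U y)) s)
          ∈ auxJ K (E (U x ⊓ U y)) (I ^ k) := by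
        rw [H1 y (U x ⊓ U y) inf_le_right s]
        exact lTensor_mem_auxJ _ ((hFmem k s).mp hs y)
      have hdiff := H3 x y (U x ⊓ U y) inf_le_left inf_le_right
        (res (iSup U) (U x ⊓ U y) (le_trans inf_le_right (le_iSup U y)) s) k hmemy
      have h0 := piPhi_eq_zero_of_mem_auxJ (φ j) (hφzero' j) hdiff
      rw [map_sub, sub_eq_zero] at h0
      exact h0
    have hgrex' : ∀ (s : ↥(Fsub k)) (j : Fin r), ∃ g : E (iSup U), ∀ x,
        resE (iSup U) (U x) (le_iSup U x) g
          = piPhi (E (U x)) (φ j)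
              (e x (U x) le_rfl (res (iSup U) (U x) (le_iSup U x) (s : ℰ (iSup U)))) :=
      fun s j => hgrex s.1 s.2 j
    choose grf hgrf using hgrex'
    have hgadd : ∀ s t : ↥(Fsub k), grf (s + t) = grf s + grf t := by
      intro s t; funext j
      refine sepE X U _ _ fun x => ?_
      have hcoe : ((s + t : ↥(Fsub k)) : ℰ (iSup U)) = ↑s + ↑t := rfl
      rw [hgrf, Pi.add_apply, map_add, hgrf, hgrf, hcoe, map_add, map_add, map_add]
    have hgsmul : ∀ (c : K) (s : ↥(Fsub k)), grf (c • s) = c • grf s := by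
      intro c s; funext j
      refine sepE X U _ _ fun x => ?_
      have hcoe : ((c • s : ↥(Fsub k)) : ℰ (iSup U)) = c • (s : ℰ (iSup U)) := rfl
      rw [hgrf, Pi.smul_apply, map_smul, hgrf, hcoe,
        (res (iSup U) (U x) (le_iSup U x)).map_smul_of_tower, he_smulK, map_smul]
    have hker_gr : ∀ s : ↥(Fsub k), grf s = 0 → (s : ℰ (iSup U)) ∈ Fsub (k + 1) := by
      intro s h0
      rw [hFmem]
      intro x
      refine mem_auxJ_of_coords_zero av φ (I ^ k) (I ^ (k + 1)) (fun j => havSk j) hδ hkerφ'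
        ((hFmem k _).mp s.2 x) fun j => ?_
      have h1 := hgrf s j x
      rw [h0] at h1
      simp only [Pi.zero_apply, map_zero] at h1
      exact h1.symm
    refine ⟨r, hrankid, ?_⟩
    set gr : ↥(Fsub k) →ₗ[K] (Fin r → E (iSup U)) :=
      { toFun := grf,
        map_add' := hgadd,
        map_smul' := by intro c s; simpa using hgsmul c s } with hgrdef
    have h1 := LinearMap.rank_range_add_rank_ker gr
    have h2 : Module.rank K ↥(LinearMap.range gr)
        ≤ ((r * Module.finrank K (E (iSup U)) : ℕ) : Cardinal) := by
      refine le_trans (Submodule.rank_le _) ?_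
      rw [← Module.finrank_eq_rank K (Fin r → E (iSup U))]
      norm_cast
      rw [Module.finrank_pi_fintype]
      rw [Finset.sum_const, Finset.card_univ, Fintype.card_fin, smul_eq_mul]
    have h3 : Module.rank K ↥(LinearMap.ker gr) ≤ Module.rank K ↥(Fsub (k + 1)) := by
      have hsub : LinearMap.ker gr ≤ Submodule.comap (Fsub k).subtype (Fsub (k + 1)) := by
        intro s hs
        rw [LinearMap.mem_ker] at hs
        exact hker_gr s hs
      refine le_trans (Submodule.rank_mono hsub) ?_
      rw [(Submodule.comapSubtypeEquivOfLe (hFle k)).rank_eq]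
    rw [← h1]
    exact add_le_add h2 h3
  have main : ∀ j k, k + j = N →
      Module.rank K ↥(Fsub k)
        ≤ ((Module.finrank K ((I ^ k).restrictScalars K)
            * Module.finrank K (E (iSup U)) : ℕ) : Cardinal) := by
    intro j
    induction j with
    | zero =>
      intro k hk
      have hkN : k = N := by omega
      subst hkN
      rw [hFN, rank_bot]
      exact zero_le
    | succ j ih =>
      intro k hk
      obtain ⟨r, hrid, hstep⟩ := step k
      have harith : r * Module.finrank K (E (iSup U))
          + Module.finrank K ((I ^ (k + 1)).restrictScalars K) * Module.finrank K (E (iSup U))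
          = Module.finrank K ((I ^ k).restrictScalars K) * Module.finrank K (E (iSup U)) := by
        rw [hrid]; ring
      calc Module.rank K ↥(Fsub k)
          ≤ ((r * Module.finrank K (E (iSup U)) : ℕ) : Cardinal)
            + Module.rank K ↥(Fsub (k + 1)) := hstep
        _ ≤ ((r * Module.finrank K (E (iSup U)) : ℕ) : Cardinal)
            + ((Module.finrank K ((I ^ (k + 1)).restrictScalars K)
                * Module.finrank K (E (iSup U)) : ℕ) : Cardinal) :=
            add_le_add_right (ih (k + 1) (by omega)) _
        _ = ((Module.finrank K ((I ^ k).restrictScalars K)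
            * Module.finrank K (E (iSup U)) : ℕ) : Cardinal) := by
            rw [← Nat.cast_add, harith]
  have hm0 : Module.finrank K ((I ^ 0).restrictScalars K) = Module.finrank K P := by
    rw [pow_zero, Ideal.one_eq_top]
    have h : ((⊤ : Ideal P).restrictScalars K) = (⊤ : Submodule K P) :=
      Submodule.restrictScalars_top K P P
    rw [h]
    exact finrank_top K P
  calc Module.rank K (ℰ (iSup U))
      = Module.rank K ↥(⊤ : Submodule K (ℰ (iSup U))) := (rank_top K _).symm
    _ = Module.rank K ↥(Fsub 0) := by rw [hF0]
    _ ≤ ((Module.finrank K ((I ^ 0).restrictScalars K)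
          * Module.finrank K (E (iSup U)) : ℕ) : Cardinal) := main N 0 (by omega)
    _ = (Module.finrank K (E (iSup U)) : Cardinal) * (Module.finrank K P : Cardinal) := by
        rw [hm0]
        push_cast
        ring
end

section
/- Let P be a finite-dimensional local K-algebra with maximal ideal I, Iᴺ = 0, residue field K, and let ℰ be a sheaf of P-modules on X locally isomorphic to P ⊗ E (for E := ℰ/Iℰ), compatibly with #′. If the first sheaf cohomology H¹(X, E) vanishes, then the projection #′ : ℰ(X) → E(X) on global sections is surjective, i.e. for every f ∈ E(X) there exists f̃ ∈ ℰ(X) with f̃^{#′} = f. -/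
open TopologicalSpace

section Aux
variable {K : Type} [Field K] {P : Type} [CommRing P] [Algebra K P]
variable {A B : Type} [AddCommGroup A] [Module P A] [AddCommGroup B] [Module P B]

theorem aux_map_smul_top {J : Ideal P} (f : A →ₗ[P] B) {x : A}
    (hx : x ∈ J • (⊤ : Submodule P A)) : f x ∈ J • (⊤ : Submodule P B) := by
  refine Submodule.smul_induction_on hx (fun r hr n _ => ?_) (fun a b ha hb => ?_)
  · rw [map_smul]; exact Submodule.smul_mem_smul hr trivial
  · rw [map_add]; exact Submodule.add_mem _ ha hb

theorem aux_bot_smul {x : A} (hx : x ∈ (⊥ : Ideal P) • (⊤ : Submodule P A)) : x = 0 := by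
  rw [Submodule.bot_smul] at hx; simpa using hx

theorem aux_mul_smul {J' I : Ideal P} {m : P} (hJI : ∀ i ∈ I, m * i ∈ J')
    {x : A} (hx : x ∈ I • (⊤ : Submodule P A)) : m • x ∈ J' • (⊤ : Submodule P A) := by
  refine Submodule.smul_induction_on hx (fun r hr n _ => ?_) (fun a b ha hb => ?_)
  · rw [smul_smul]
    exact Submodule.smul_mem_smul (hJI r hr) trivial
  · rw [smul_add]; exact Submodule.add_mem _ ha hb

theorem aux_decompose [Module K A] [IsScalarTower K P A] {J J' : Ideal P} {m : P}
    (lam : P →ₗ[K] K) (hdec : ∀ u ∈ J, u - lam u • m ∈ J')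
    {x : A} (hx : x ∈ J • (⊤ : Submodule P A)) :
    ∃ t w, x = m • t + w ∧ w ∈ J' • (⊤ : Submodule P A) := by
  refine Submodule.smul_induction_on hx (fun u hu n _ => ?_) ?_
  · refine ⟨lam u • n, (u - lam u • m) • n, ?_, Submodule.smul_mem_smul (hdec u hu) trivial⟩
    have h : m • lam u • n = (lam u • m) • n := by rw [smul_assoc, smul_comm]
    rw [h, ← add_smul]
    congr 1
    abel
  · rintro a b ⟨t1, w1, rfl, hw1⟩ ⟨t2, w2, rfl, hw2⟩
    exact ⟨t1 + t2, w1 + w2, by rw [smul_add]; abel, Submodule.add_mem _ hw1 hw2⟩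

theorem aux_dual [FiniteDimensional K P] (W : Submodule K P) {m : P} (hm : m ∉ W) :
    ∃ lam : P →ₗ[K] K, lam m = 1 ∧ ∀ u ∈ W, lam u = 0 := by
  have h0 : W.mkQ m ≠ 0 := by
    rw [Submodule.mkQ_apply, Ne, Submodule.Quotient.mk_eq_zero]; exact hm
  have hex : ∃ φ : Module.Dual K (P ⧸ W), φ (W.mkQ m) ≠ 0 := by
    by_contra h; push_neg at h
    exact h0 ((Module.forall_dual_apply_eq_zero_iff K _).mp h)
  obtain ⟨φ, hφ⟩ := hex
  refine ⟨(φ (W.mkQ m))⁻¹ • (φ.comp W.mkQ), ?_, fun u hu => ?_⟩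
  · simp only [LinearMap.smul_apply, LinearMap.comp_apply, smul_eq_mul]
    exact inv_mul_cancel₀ hφ
  · have h1 : W.mkQ u = 0 := by rw [Submodule.mkQ_apply, Submodule.Quotient.mk_eq_zero]; exact hu
    simp [h1]

variable {M : Type} [AddCommGroup M] [Module K M] (ρ : P →ₐ[K] K)

theorem aux_pi_tmul (p : P) (v : M) :
    TensorProduct.lift ((LinearMap.lsmul K M).comp ρ.toLinearMap) (p ⊗ₜ[K] v) = ρ p • v := by
  simp

theorem aux_pi_smul (m : P) (y : TensorProduct K P M) :
    TensorProduct.lift ((LinearMap.lsmul K M).comp ρ.toLinearMap) (m • y)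
      = ρ m • TensorProduct.lift ((LinearMap.lsmul K M).comp ρ.toLinearMap) y := by
  induction y using TensorProduct.induction_on with
  | zero => simp
  | tmul p v => rw [TensorProduct.smul_tmul', smul_eq_mul]; simp [mul_smul]
  | add a b ha hb => rw [smul_add, map_add, map_add, ha, hb, smul_add]

theorem aux_ker_pi {I : Ideal P} (hker : ∀ p : P, ρ p = 0 → p ∈ I)
    (t : TensorProduct K P M) :
    t - (1 : P) ⊗ₜ[K] (TensorProduct.lift ((LinearMap.lsmul K M).comp ρ.toLinearMap) t)
      ∈ I • (⊤ : Submodule P (TensorProduct K P M)) := by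
  induction t using TensorProduct.induction_on with
  | zero => simp
  | tmul p v =>
      have h1 : (1 : P) ⊗ₜ[K] (TensorProduct.lift ((LinearMap.lsmul K M).comp ρ.toLinearMap) (p ⊗ₜ[K] v))
          = (ρ p • (1:P)) ⊗ₜ[K] v := by
        rw [aux_pi_tmul, TensorProduct.tmul_smul, TensorProduct.smul_tmul']
      rw [h1, ← TensorProduct.sub_tmul]
      have h2 : (p - ρ p • (1:P)) ⊗ₜ[K] v = (p - ρ p • (1:P)) • ((1:P) ⊗ₜ[K] v) := by
        rw [TensorProduct.smul_tmul', smul_eq_mul, mul_one]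
      rw [h2]
      refine Submodule.smul_mem_smul (hker _ ?_) trivial
      rw [map_sub, map_smul]
      simp
  | add a b ha hb =>
      have : a + b - (1:P) ⊗ₜ[K] (TensorProduct.lift ((LinearMap.lsmul K M).comp ρ.toLinearMap) (a + b))
          = (a - (1:P) ⊗ₜ[K] (TensorProduct.lift ((LinearMap.lsmul K M).comp ρ.toLinearMap) a))
            + (b - (1:P) ⊗ₜ[K] (TensorProduct.lift ((LinearMap.lsmul K M).comp ρ.toLinearMap) b)) := by
        rw [map_add, TensorProduct.tmul_add]; abel
      rw [this]; exact Submodule.add_mem _ ha hb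

theorem aux_lam_kill {J' : Ideal P} (lam : P →ₗ[K] K) (hJ' : ∀ u ∈ J', lam u = 0)
    {x : TensorProduct K P M} (hx : x ∈ J' • (⊤ : Submodule P (TensorProduct K P M))) :
    TensorProduct.lift ((LinearMap.lsmul K M).comp lam) x = 0 := by
  have key : ∀ u ∈ J', ∀ n : TensorProduct K P M,
      TensorProduct.lift ((LinearMap.lsmul K M).comp lam) (u • n) = 0 := by
    intro u hu n
    induction n using TensorProduct.induction_on with
    | zero => simp
    | tmul p v =>
        rw [TensorProduct.smul_tmul', smul_eq_mul, TensorProduct.lift.tmul]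
        simp [hJ' _ (Ideal.mul_mem_right p _ hu)]
    | add a b ha hb => rw [smul_add, map_add, ha, hb, add_zero]
  refine Submodule.smul_induction_on hx (fun u hu n _ => key u hu n) (fun a b ha hb => ?_)
  rw [map_add, ha, hb, add_zero]

theorem aux_lam_m_smul {m : P} (lam : P →ₗ[K] K) (hmp : ∀ p, lam (m * p) = ρ p)
    (x : TensorProduct K P M) :
    TensorProduct.lift ((LinearMap.lsmul K M).comp lam) (m • x)
      = TensorProduct.lift ((LinearMap.lsmul K M).comp ρ.toLinearMap) x := by
  induction x using TensorProduct.induction_on with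
  | zero => simp
  | tmul p v => rw [TensorProduct.smul_tmul', smul_eq_mul, TensorProduct.lift.tmul,
      TensorProduct.lift.tmul]; simp [hmp p]
  | add a b ha hb => rw [smul_add, map_add, map_add, ha, hb]

end Aux

/-- The inductive package: a cover trivializing `ℰ`, with lifts of `f` whose
pairwise differences lie in `J • ℰ`. -/
def GoodPkg (K P X : Type) [Field K] [CommRing P] [Algebra K P] [TopologicalSpace X]
    (ℰ : Opens X → Type) [∀ U, AddCommGroup (ℰ U)] [∀ U, Module P (ℰ U)]
    [∀ U, Module K (ℰ U)]
    (E : Opens X → Type) [∀ U, AddCommGroup (E U)] [∀ U, Module K (E U)]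
    (res : ∀ U V : Opens X, V ≤ U → (ℰ U →ₗ[P] ℰ V))
    (resE : ∀ U V : Opens X, V ≤ U → (E U →ₗ[K] E V))
    (proj : ∀ U : Opens X, ℰ U →ₗ[K] E U)
    (ρ : P →ₐ[K] K) (f : E ⊤) (J : Ideal P) : Prop :=
  ∃ (κ : Type) (V : κ → Opens X)
    (e : ∀ c, ∀ V' : Opens X, V' ≤ V c → (ℰ V' ≃ₗ[P] TensorProduct K P (E V')))
    (s : ∀ c, ℰ (V c)),
    iSup V = ⊤ ∧
    (∀ (c : _) (V' : Opens X) (h : V' ≤ V c) (t : ℰ V'),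
      proj V' t
        = TensorProduct.lift ((LinearMap.lsmul K (E V')).comp ρ.toLinearMap) (e c V' h t)) ∧
    (∀ c, proj (V c) (s c) = resE ⊤ (V c) le_top f) ∧
    (∀ c c', res (V c) (V c ⊓ V c') inf_le_left (s c)
        - res (V c') (V c ⊓ V c') inf_le_right (s c')
        ∈ J • (⊤ : Submodule P (ℰ (V c ⊓ V c'))))


/-- Lemma 4.2 of the paper: `P` a finite-dimensional local `K`-algebra with unique
maximal ideal `I`, `I^N = 0`, residue projection `#' = ρ : P → P/I ≅ K`; `ℰ` a sheaf
of `P`-modules on a second-countable space `X` locally isomorphic to `P ⊗ E` for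
`E := ℰ/Iℰ`, compatibly with `#'`.  If the (Čech) cohomology `H¹(X, E)` vanishes,
then `#' : ℰ(X) → E(X)` is surjective: every `f ∈ E(X)` lifts to `f̃ ∈ ℰ(X)`. -/
theorem stmt_4 (K : Type) [Field K]
    (P : Type) [CommRing P] [Algebra K P] [FiniteDimensional K P]
    (I : Ideal P) (hImax : I.IsMaximal) (hIuniq : ∀ J : Ideal P, J.IsMaximal → J = I)
    (N : ℕ) (hIN : I ^ N = ⊥)
    (ρ : P →ₐ[K] K) (hρ : RingHom.ker (ρ : P →+* K) = I)
    (X : Type) [TopologicalSpace X] [SecondCountableTopology X]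
    -- the sheaf ℰ of P-modules on X
    (ℰ : Opens X → Type) [∀ U, AddCommGroup (ℰ U)] [∀ U, Module P (ℰ U)]
    [∀ U, Module K (ℰ U)] [∀ U, IsScalarTower K P (ℰ U)]
    (res : ∀ U V : Opens X, V ≤ U → (ℰ U →ₗ[P] ℰ V))
    (res_refl : ∀ (U : Opens X) (s : ℰ U), res U U le_rfl s = s)
    (res_comp : ∀ (U V W : Opens X) (hVU : V ≤ U) (hWV : W ≤ V) (s : ℰ U),
      res V W hWV (res U V hVU s) = res U W (le_trans hWV hVU) s)
    (sep : ∀ (ι : Type) (U : ι → Opens X) (s t : ℰ (iSup U)),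
      (∀ i, res (iSup U) (U i) (le_iSup U i) s = res (iSup U) (U i) (le_iSup U i) t) →
      s = t)
    (glue : ∀ (ι : Type) (U : ι → Opens X) (s : ∀ i, ℰ (U i)),
      (∀ i j, res (U i) (U i ⊓ U j) inf_le_left (s i)
            = res (U j) (U i ⊓ U j) inf_le_right (s j)) →
      ∃ g : ℰ (iSup U), ∀ i, res (iSup U) (U i) (le_iSup U i) g = s i)
    -- the quotient sheaf E = ℰ/Iℰ of K-vector spaces on X
    (E : Opens X → Type) [∀ U, AddCommGroup (E U)] [∀ U, Module K (E U)]
    (resE : ∀ U V : Opens X, V ≤ U → (E U →ₗ[K] E V))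
    (resE_refl : ∀ (U : Opens X) (s : E U), resE U U le_rfl s = s)
    (resE_comp : ∀ (U V W : Opens X) (hVU : V ≤ U) (hWV : W ≤ V) (s : E U),
      resE V W hWV (resE U V hVU s) = resE U W (le_trans hWV hVU) s)
    (sepE : ∀ (ι : Type) (U : ι → Opens X) (s t : E (iSup U)),
      (∀ i, resE (iSup U) (U i) (le_iSup U i) s = resE (iSup U) (U i) (le_iSup U i) t) →
      s = t)
    (glueE : ∀ (ι : Type) (U : ι → Opens X) (s : ∀ i, E (U i)),
      (∀ i j, resE (U i) (U i ⊓ U j) inf_le_left (s i)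
            = resE (U j) (U i ⊓ U j) inf_le_right (s j)) →
      ∃ g : E (iSup U), ∀ i, resE (iSup U) (U i) (le_iSup U i) g = s i)
    -- the canonical projection #' : ℰ → E
    (proj : ∀ U : Opens X, ℰ U →ₗ[K] E U)
    (proj_res : ∀ (U V : Opens X) (h : V ≤ U) (s : ℰ U),
      proj V (res U V h s) = resE U V h (proj U s))
    -- local triviality: ℰ ≅ P ⊗ E locally, compatibly with #' and restrictions
    (htriv : ∀ x : X, ∃ U : Opens X, x ∈ U ∧
      ∃ e : ∀ V : Opens X, V ≤ U → (ℰ V ≃ₗ[P] TensorProduct K P (E V)),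
        (∀ (V W : Opens X) (hWV : W ≤ V) (hVU : V ≤ U) (s : ℰ V),
          e W (le_trans hWV hVU) (res V W hWV s)
            = LinearMap.lTensor P (resE V W hWV) (e V hVU s)) ∧
        (∀ (V : Opens X) (hVU : V ≤ U) (s : ℰ V),
          proj V s
            = TensorProduct.lift ((LinearMap.lsmul K (E V)).comp ρ.toLinearMap)
                (e V hVU s)))
    -- vanishing of H¹(X, E): every Čech 1-cocycle for a cover of X is, after
    -- refinement of the cover, a coboundary
    (hH1 : ∀ (ι : Type) (U : ι → Opens X), iSup U = ⊤ →
      ∀ a : ∀ i j, E (U i ⊓ U j),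
        (∀ (i j l : ι)
           (h1 : (U i ⊓ U j) ⊓ U l ≤ U i ⊓ U j)
           (h2 : (U i ⊓ U j) ⊓ U l ≤ U j ⊓ U l)
           (h3 : (U i ⊓ U j) ⊓ U l ≤ U i ⊓ U l),
          resE (U i ⊓ U j) ((U i ⊓ U j) ⊓ U l) h1 (a i j)
            + resE (U j ⊓ U l) ((U i ⊓ U j) ⊓ U l) h2 (a j l)
            = resE (U i ⊓ U l) ((U i ⊓ U j) ⊓ U l) h3 (a i l)) →
        ∃ (κ : Type) (V : κ → Opens X) (rf : κ → ι),
          iSup V = ⊤ ∧ (∀ c, V c ≤ U (rf c)) ∧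
          ∃ τ : ∀ c, E (V c), ∀ (c c' : κ)
            (h : V c ⊓ V c' ≤ U (rf c) ⊓ U (rf c')),
            resE (U (rf c) ⊓ U (rf c')) (V c ⊓ V c') h (a (rf c) (rf c'))
              = resE (V c) (V c ⊓ V c') inf_le_left (τ c)
                - resE (V c') (V c ⊓ V c') inf_le_right (τ c')) :
    ∀ f : E ⊤, ∃ g : ℰ ⊤, proj ⊤ g = f := by

  intro f
  have hmemI : ∀ p : P, ρ p = 0 → p ∈ I := fun p hp => by
    rw [← hρ]; exact RingHom.mem_ker.mpr hp
  have hIρ : ∀ p ∈ I, ρ p = 0 := fun p hp => by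
    rw [← hρ] at hp; exact RingHom.mem_ker.mp hp
  -- kernel of proj is I • ℰ on trivialized opens
  have hkerproj : ∀ (V' : Opens X) (e : ℰ V' ≃ₗ[P] TensorProduct K P (E V'))
      (_ : ∀ t, proj V' t
        = TensorProduct.lift ((LinearMap.lsmul K (E V')).comp ρ.toLinearMap) (e t))
      (x : ℰ V'), proj V' x = 0 → x ∈ I • (⊤ : Submodule P (ℰ V')) := by
    intro V' e he x hx
    have h1 := aux_ker_pi (M := E V') ρ hmemI (e x)
    have h2 : TensorProduct.lift ((LinearMap.lsmul K (E V')).comp ρ.toLinearMap) (e x) = 0 := by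
      rw [← he]; exact hx
    rw [h2, TensorProduct.tmul_zero, sub_zero] at h1
    have h3 := aux_map_smul_top (J := I) e.symm.toLinearMap h1
    simpa using h3
  -- the base case : differences of local lifts lie in I • ℰ
  have base : GoodPkg K P X ℰ E res resE proj ρ f I := by
    choose U hUmem e hcomp using htriv
    have hsup : iSup U = ⊤ := by
      rw [eq_top_iff]
      intro y _
      exact Opens.mem_iSup.mpr ⟨y, hUmem y⟩
    have hsx : ∀ x : X, ∃ sx : ℰ (U x), proj (U x) sx = resE ⊤ (U x) le_top f := by
      intro x
      refine ⟨(e x (U x) le_rfl).symm ((1:P) ⊗ₜ[K] resE ⊤ (U x) le_top f), ?_⟩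
      rw [(hcomp x).2 (U x) le_rfl _, LinearEquiv.apply_symm_apply, TensorProduct.lift.tmul]
      simp
    choose sx hsxp using hsx
    refine ⟨X, U, fun x V' h => e x V' h, sx, hsup,
      (fun c V' h t => (hcomp c).2 V' h t), hsxp, ?_⟩
    intro c c'
    apply hkerproj _ (e c (U c ⊓ U c') inf_le_left) (fun t => (hcomp c).2 _ inf_le_left t)
    rw [map_sub, proj_res, proj_res, hsxp c, hsxp c', resE_comp, resE_comp]
    exact sub_self _
  -- the induction step
  have step : ∀ J : Ideal P, J ≤ I → J ≠ ⊥ → GoodPkg K P X ℰ E res resE proj ρ f J →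
      ∃ J' : Ideal P, J' ≤ I ∧
        Module.finrank K ↥(Submodule.restrictScalars K J')
          < Module.finrank K ↥(Submodule.restrictScalars K J) ∧
        GoodPkg K P X ℰ E res resE proj ρ f J' := by
    rintro J hJI hJne ⟨κ, V, e, s, hsup, he, hs, hd⟩
    -- find a good element m of J and a functional lam
    have hmul_le : J * I ≤ J := Ideal.mul_le_left
    have hlt : J * I < J := by
      refine lt_of_le_of_ne hmul_le (fun heq => hJne ?_)
      have hpow : ∀ n : ℕ, J = J * I ^ n := by
        intro n
        induction n with
        | zero => simp
        | succ n ih =>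
            calc J = J * I := heq.symm
            _ = (J * I ^ n) * I := by rw [← ih]
            _ = J * I ^ (n + 1) := by rw [mul_assoc, ← pow_succ]
      have hN := hpow N
      rwa [hIN, Ideal.mul_bot] at hN
    obtain ⟨m, hmJ, hmJI⟩ := SetLike.exists_of_lt hlt
    have hmI : m ∈ I := hJI hmJ
    obtain ⟨lam, hlam1, hlam0⟩ := aux_dual (Submodule.restrictScalars K (J * I)) (m := m)
      (by exact hmJI)
    have hlam0' : ∀ u ∈ J * I, lam u = 0 := fun u hu => hlam0 u (by exact hu)
    have hIdiff : ∀ p : P, p - ρ p • (1:P) ∈ I := by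
      intro p
      apply hmemI
      rw [map_sub, map_smul, map_one]
      simp [smul_eq_mul]
    -- the smaller ideal J'
    let J' : Ideal P :=
      { carrier := {u | u ∈ J ∧ lam u = 0}
        zero_mem' := ⟨J.zero_mem, map_zero _⟩
        add_mem' := fun ha hb => ⟨J.add_mem ha.1 hb.1, by rw [map_add, ha.2, hb.2, add_zero]⟩
        smul_mem' := by
          intro c x hx
          simp only [smul_eq_mul, Set.mem_setOf_eq] at *
          refine ⟨J.mul_mem_left c hx.1, ?_⟩
          have hsplit : c * x = ρ c • x + (c - ρ c • (1:P)) * x := by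
            rw [sub_mul, smul_mul_assoc, one_mul]
            abel
          rw [hsplit, map_add, map_smul, smul_eq_mul, hx.2, mul_zero, zero_add]
          exact hlam0' _ (by rw [mul_comm (c - ρ c • (1:P)) x]; exact Ideal.mul_mem_mul hx.1 (hIdiff c)) }
    have hmemJ' : ∀ u : P, u ∈ J' ↔ (u ∈ J ∧ lam u = 0) := fun u => Iff.rfl
    have hJ'J : J' ≤ J := fun u hu => ((hmemJ' u).mp hu).1
    have hJ'I : J' ≤ I := le_trans hJ'J hJI
    have hlamJ' : ∀ u ∈ J', lam u = 0 := fun u hu => ((hmemJ' u).mp hu).2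
    have hdec : ∀ u ∈ J, u - lam u • m ∈ J' := by
      intro u hu
      refine (hmemJ' _).mpr ⟨?_, ?_⟩
      · refine J.sub_mem hu ?_
        have h1 : lam u • m = algebraMap K P (lam u) * m := by rw [Algebra.smul_def]
        rw [h1]
        exact J.mul_mem_left _ hmJ
      · rw [map_sub, map_smul, hlam1, smul_eq_mul, mul_one, sub_self]
    have hJI' : ∀ i ∈ I, m * i ∈ J' := by
      intro i hi
      exact (hmemJ' _).mpr ⟨Ideal.mul_mem_right i J hmJ, hlam0' _ (Ideal.mul_mem_mul hmJ hi)⟩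
    have hmp : ∀ p, lam (m * p) = ρ p := by
      intro p
      have hsplit : m * p = ρ p • m + m * (p - ρ p • (1:P)) := by
        rw [mul_sub, mul_smul_comm, mul_one]
        abel
      rw [hsplit, map_add, map_smul, smul_eq_mul, hlam1, mul_one,
        hlam0' _ (Ideal.mul_mem_mul hmJ (hIdiff p)), add_zero]
    have hrank : Module.finrank K ↥(Submodule.restrictScalars K J')
        < Module.finrank K ↥(Submodule.restrictScalars K J) := by
      have hltK : Submodule.restrictScalars K J' < Submodule.restrictScalars K J := by
        rw [SetLike.lt_iff_le_and_exists]
        refine ⟨fun u hu => by simpa using hJ'J (by simpa using hu), m, by simpa using hmJ, ?_⟩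
        intro hmem
        have h0 : lam m = 0 := hlamJ' m (by simpa using hmem)
        rw [hlam1] at h0
        exact one_ne_zero h0
      exact Submodule.finrank_lt_finrank_of_lt hltK
    -- decompose the pairwise differences
    have hdecomp := fun c c' => aux_decompose (A := ℰ (V c ⊓ V c')) lam hdec (hd c c')
    choose t w hxw hw using hdecomp
    -- the Čech 1-cocycle
    have hco : ∀ (c c' c'' : κ)
        (h1 : (V c ⊓ V c') ⊓ V c'' ≤ V c ⊓ V c')
        (h2 : (V c ⊓ V c') ⊓ V c'' ≤ V c' ⊓ V c'')
        (h3 : (V c ⊓ V c') ⊓ V c'' ≤ V c ⊓ V c''),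
        resE (V c ⊓ V c') ((V c ⊓ V c') ⊓ V c'') h1 (proj (V c ⊓ V c') (t c c'))
          + resE (V c' ⊓ V c'') ((V c ⊓ V c') ⊓ V c'') h2 (proj (V c' ⊓ V c'') (t c' c''))
          = resE (V c ⊓ V c'') ((V c ⊓ V c') ⊓ V c'') h3 (proj (V c ⊓ V c'') (t c c'')) := by
      intro c c' c'' h1 h2 h3
      have hTc : (V c ⊓ V c') ⊓ V c'' ≤ V c := h1.trans inf_le_left
      have hTc' : (V c ⊓ V c') ⊓ V c'' ≤ V c' := h1.trans inf_le_right
      have hTc'' : (V c ⊓ V c') ⊓ V c'' ≤ V c'' := h2.trans inf_le_right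
      have hproju : proj ((V c ⊓ V c') ⊓ V c'')
          (res (V c ⊓ V c') _ h1 (t c c') + res (V c' ⊓ V c'') _ h2 (t c' c'')
            - res (V c ⊓ V c'') _ h3 (t c c'')) = 0 := by
        have hsum : res (V c ⊓ V c') _ h1
              (res (V c) (V c ⊓ V c') inf_le_left (s c)
                - res (V c') (V c ⊓ V c') inf_le_right (s c'))
            + res (V c' ⊓ V c'') _ h2
              (res (V c') (V c' ⊓ V c'') inf_le_left (s c')
                - res (V c'') (V c' ⊓ V c'') inf_le_right (s c''))
            - res (V c ⊓ V c'') _ h3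
              (res (V c) (V c ⊓ V c'') inf_le_left (s c)
                - res (V c'') (V c ⊓ V c'') inf_le_right (s c'')) = 0 := by
          have e1 : res (V c ⊓ V c') ((V c ⊓ V c') ⊓ V c'') h1
              (res (V c) (V c ⊓ V c') inf_le_left (s c))
              = res (V c) ((V c ⊓ V c') ⊓ V c'') hTc (s c) := by rw [res_comp]
          have e2 : res (V c ⊓ V c') ((V c ⊓ V c') ⊓ V c'') h1
              (res (V c') (V c ⊓ V c') inf_le_right (s c'))
              = res (V c') ((V c ⊓ V c') ⊓ V c'') hTc' (s c') := by rw [res_comp]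
          have e3 : res (V c' ⊓ V c'') ((V c ⊓ V c') ⊓ V c'') h2
              (res (V c') (V c' ⊓ V c'') inf_le_left (s c'))
              = res (V c') ((V c ⊓ V c') ⊓ V c'') hTc' (s c') := by rw [res_comp]
          have e4 : res (V c' ⊓ V c'') ((V c ⊓ V c') ⊓ V c'') h2
              (res (V c'') (V c' ⊓ V c'') inf_le_right (s c''))
              = res (V c'') ((V c ⊓ V c') ⊓ V c'') hTc'' (s c'') := by rw [res_comp]
          have e5 : res (V c ⊓ V c'') ((V c ⊓ V c') ⊓ V c'') h3
              (res (V c) (V c ⊓ V c'') inf_le_left (s c))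
              = res (V c) ((V c ⊓ V c') ⊓ V c'') hTc (s c) := by rw [res_comp]
          have e6 : res (V c ⊓ V c'') ((V c ⊓ V c') ⊓ V c'') h3
              (res (V c'') (V c ⊓ V c'') inf_le_right (s c''))
              = res (V c'') ((V c ⊓ V c') ⊓ V c'') hTc'' (s c'') := by rw [res_comp]
          rw [map_sub, map_sub, map_sub, e1, e2, e3, e4, e5, e6]
          abel
        have hmu : m • (res (V c ⊓ V c') _ h1 (t c c') + res (V c' ⊓ V c'') _ h2 (t c' c'')
              - res (V c ⊓ V c'') _ h3 (t c c''))
            ∈ J' • (⊤ : Submodule P (ℰ ((V c ⊓ V c') ⊓ V c''))) := by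
          have f1 : m • res (V c ⊓ V c') ((V c ⊓ V c') ⊓ V c'') h1 (t c c')
              = res (V c ⊓ V c') _ h1
                  (res (V c) (V c ⊓ V c') inf_le_left (s c)
                    - res (V c') (V c ⊓ V c') inf_le_right (s c'))
                - res (V c ⊓ V c') _ h1 (w c c') := by
            rw [← map_sub, ← map_smul]
            congr 1
            rw [hxw c c']
            abel
          have f2 : m • res (V c' ⊓ V c'') ((V c ⊓ V c') ⊓ V c'') h2 (t c' c'')
              = res (V c' ⊓ V c'') _ h2
                  (res (V c') (V c' ⊓ V c'') inf_le_left (s c')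
                    - res (V c'') (V c' ⊓ V c'') inf_le_right (s c''))
                - res (V c' ⊓ V c'') _ h2 (w c' c'') := by
            rw [← map_sub, ← map_smul]
            congr 1
            rw [hxw c' c'']
            abel
          have f3 : m • res (V c ⊓ V c'') ((V c ⊓ V c') ⊓ V c'') h3 (t c c'')
              = res (V c ⊓ V c'') _ h3
                  (res (V c) (V c ⊓ V c'') inf_le_left (s c)
                    - res (V c'') (V c ⊓ V c'') inf_le_right (s c''))
                - res (V c ⊓ V c'') _ h3 (w c c'') := by
            rw [← map_sub, ← map_smul]
            congr 1
            rw [hxw c c'']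
            abel
          have hexp : m • (res (V c ⊓ V c') _ h1 (t c c')
                + res (V c' ⊓ V c'') _ h2 (t c' c'')
                - res (V c ⊓ V c'') _ h3 (t c c''))
              = -(res (V c ⊓ V c') _ h1 (w c c') + res (V c' ⊓ V c'') _ h2 (w c' c'')
                  - res (V c ⊓ V c'') _ h3 (w c c'')) := by
            rw [smul_sub, smul_add, f1, f2, f3]
            have hre : ∀ D1 W1 D2 W2 D3 W3 : ℰ ((V c ⊓ V c') ⊓ V c''),
                (D1 - W1) + (D2 - W2) - (D3 - W3) = (D1 + D2 - D3) - (W1 + W2 - W3) := by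
              intros
              abel
            rw [hre, hsum, zero_sub]
          rw [hexp]
          refine Submodule.neg_mem _ ?_
          refine Submodule.sub_mem _ (Submodule.add_mem _ ?_ ?_) ?_
          · exact aux_map_smul_top _ (hw c c')
          · exact aux_map_smul_top _ (hw c' c'')
          · exact aux_map_smul_top _ (hw c c'')
        have hx1 : m • (e c ((V c ⊓ V c') ⊓ V c'') hTc)
              (res (V c ⊓ V c') _ h1 (t c c') + res (V c' ⊓ V c'') _ h2 (t c' c'')
                - res (V c ⊓ V c'') _ h3 (t c c''))
            ∈ J' • (⊤ : Submodule P (TensorProduct K P (E ((V c ⊓ V c') ⊓ V c'')))) := by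
          rw [← map_smul]
          exact aux_map_smul_top (e c ((V c ⊓ V c') ⊓ V c'') hTc).toLinearMap hmu
        rw [he c ((V c ⊓ V c') ⊓ V c'') hTc]
        rw [← aux_lam_m_smul (M := E ((V c ⊓ V c') ⊓ V c'')) ρ lam hmp]
        exact aux_lam_kill lam hlamJ' hx1
      have g1 : resE (V c ⊓ V c') ((V c ⊓ V c') ⊓ V c'') h1 (proj (V c ⊓ V c') (t c c'))
          = proj _ (res (V c ⊓ V c') _ h1 (t c c')) := (proj_res _ _ _ _).symm
      have g2 : resE (V c' ⊓ V c'') ((V c ⊓ V c') ⊓ V c'') h2 (proj (V c' ⊓ V c'') (t c' c''))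
          = proj _ (res (V c' ⊓ V c'') _ h2 (t c' c'')) := (proj_res _ _ _ _).symm
      have g3 : resE (V c ⊓ V c'') ((V c ⊓ V c') ⊓ V c'') h3 (proj (V c ⊓ V c'') (t c c''))
          = proj _ (res (V c ⊓ V c'') _ h3 (t c c'')) := (proj_res _ _ _ _).symm
      rw [g1, g2, g3, ← map_add, ← sub_eq_zero, ← map_sub]
      exact hproju
    obtain ⟨κ', V', rf, hsup', hle, τ, hτ⟩ :=
      hH1 κ V hsup (fun c c' => proj (V c ⊓ V c') (t c c')) hco
    -- lift τ through the trivialization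
    have hLdef : ∀ c : κ', ∃ L : ℰ (V' c),
        (e (rf c) (V' c) (hle c)) L = (1:P) ⊗ₜ[K] τ c :=
      fun c => ⟨(e (rf c) (V' c) (hle c)).symm _, LinearEquiv.apply_symm_apply _ _⟩
    choose L hL using hLdef
    have hprojL : ∀ c, proj (V' c) (L c) = τ c := by
      intro c
      rw [he (rf c) (V' c) (hle c) (L c), hL c, TensorProduct.lift.tmul]
      simp
    refine ⟨J', hJ'I, hrank, κ', V', fun c V'' h => e (rf c) V'' (h.trans (hle c)),
      fun c => res (V (rf c)) (V' c) (hle c) (s (rf c)) - m • L c, hsup',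
      fun c V'' h tt => he (rf c) V'' (h.trans (hle c)) tt, ?_, ?_⟩
    · intro c
      rw [map_sub, proj_res, hs (rf c), resE_comp]
      have hzero : proj (V' c) (m • L c) = 0 := by
        rw [he (rf c) (V' c) (hle c), map_smul, aux_pi_smul, hIρ m hmI, zero_smul]
      rw [hzero, sub_zero]
    · intro c c'
      have q1 : V' c ⊓ V' c' ≤ V (rf c) := inf_le_left.trans (hle c)
      have q2 : V' c ⊓ V' c' ≤ V (rf c') := inf_le_right.trans (hle c')
      have qO : V' c ⊓ V' c' ≤ V (rf c) ⊓ V (rf c') := le_inf q1 q2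
      have hd_eq : res (V (rf c)) (V' c ⊓ V' c') q1 (s (rf c))
          - res (V (rf c')) (V' c ⊓ V' c') q2 (s (rf c'))
          = m • res (V (rf c) ⊓ V (rf c')) (V' c ⊓ V' c') qO (t (rf c) (rf c'))
            + res (V (rf c) ⊓ V (rf c')) (V' c ⊓ V' c') qO (w (rf c) (rf c')) := by
        have e1 : res (V (rf c) ⊓ V (rf c')) (V' c ⊓ V' c') qO
            (res (V (rf c)) (V (rf c) ⊓ V (rf c')) inf_le_left (s (rf c)))
            = res (V (rf c)) (V' c ⊓ V' c') q1 (s (rf c)) := by rw [res_comp]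
        have e2 : res (V (rf c) ⊓ V (rf c')) (V' c ⊓ V' c') qO
            (res (V (rf c')) (V (rf c) ⊓ V (rf c')) inf_le_right (s (rf c')))
            = res (V (rf c')) (V' c ⊓ V' c') q2 (s (rf c')) := by rw [res_comp]
        rw [← e1, ← e2, ← map_sub, hxw (rf c) (rf c'), map_add, map_smul]
      have expand : res (V' c) (V' c ⊓ V' c') inf_le_left
            (res (V (rf c)) (V' c) (hle c) (s (rf c)) - m • L c)
          - res (V' c') (V' c ⊓ V' c') inf_le_right
            (res (V (rf c')) (V' c') (hle c') (s (rf c')) - m • L c')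
          = m • (res (V (rf c) ⊓ V (rf c')) (V' c ⊓ V' c') qO (t (rf c) (rf c'))
                - res (V' c) (V' c ⊓ V' c') inf_le_left (L c)
                + res (V' c') (V' c ⊓ V' c') inf_le_right (L c'))
            + res (V (rf c) ⊓ V (rf c')) (V' c ⊓ V' c') qO (w (rf c) (rf c')) := by
        rw [map_sub, map_sub, map_smul, map_smul, res_comp, res_comp]
        rw [smul_add, smul_sub]
        have hre2 : ∀ A B RL RL' RT RW : ℰ (V' c ⊓ V' c'),
            A - B = m • RT + RW →
            (A - m • RL) - (B - m • RL') = m • RT - m • RL + m • RL' + RW := by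
          intro A B RL RL' RT RW h
          have hmx : m • RT = A - B - RW := by rw [h]; abel
          rw [hmx]
          abel
        exact hre2 _ _ _ _ _ _ hd_eq
      rw [expand]
      refine Submodule.add_mem _ ?_ (aux_map_smul_top _ (hw (rf c) (rf c')))
      have hprojv : proj (V' c ⊓ V' c')
          (res (V (rf c) ⊓ V (rf c')) (V' c ⊓ V' c') qO (t (rf c) (rf c'))
            - res (V' c) (V' c ⊓ V' c') inf_le_left (L c)
            + res (V' c') (V' c ⊓ V' c') inf_le_right (L c')) = 0 := by
        rw [map_add, map_sub, proj_res, proj_res, proj_res, hprojL c, hprojL c', hτ c c' qO]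
        abel
      exact aux_mul_smul hJI'
        (hkerproj _ (e (rf c) (V' c ⊓ V' c') q1) (fun tt => he (rf c) _ q1 tt) _ hprojv)
  -- from the package at ⊥ we can glue
  have final : GoodPkg K P X ℰ E res resE proj ρ f ⊥ → ∃ g : ℰ ⊤, proj ⊤ g = f := by
    rintro ⟨κ, V, e, s, hsup, he, hs, hd⟩
    have hagree : ∀ c c', res (V c) (V c ⊓ V c') inf_le_left (s c)
        = res (V c') (V c ⊓ V c') inf_le_right (s c') := by
      intro c c'
      exact sub_eq_zero.mp (aux_bot_smul (hd c c'))
    obtain ⟨g, hg⟩ := glue κ V s hagree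
    have hinj : ∀ (B : Opens X) (hB : B = ⊤) (u v : E ⊤),
        resE ⊤ B hB.le u = resE ⊤ B hB.le v → u = v := by
      intro B hB
      subst hB
      intro u v h
      have h1 := resE_refl ⊤ u
      have h2 := resE_refl ⊤ v
      exact h1.symm.trans (h.trans h2)
    have key : ∀ (A : Opens X) (hA : A = ⊤) (g : ℰ A),
        (∀ c, ∃ h : V c ≤ A, proj (V c) (res A (V c) h g) = resE ⊤ (V c) le_top f) →
        ∃ g' : ℰ ⊤, proj ⊤ g' = f := by
      intro A hA
      subst hA
      intro g hgc
      refine ⟨g, ?_⟩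
      apply hinj (iSup V) hsup
      apply sepE κ V
      intro c
      rw [resE_comp, resE_comp, ← proj_res]
      obtain ⟨h, hc⟩ := hgc c
      exact hc
    exact key (iSup V) hsup g (fun c => ⟨le_iSup V c, by rw [hg c]; exact hs c⟩)
  -- strong induction on the dimension of J
  have main : ∀ (n : ℕ) (J : Ideal P), J ≤ I →
      Module.finrank K ↥(Submodule.restrictScalars K J) < n →
      GoodPkg K P X ℰ E res resE proj ρ f J → ∃ g : ℰ ⊤, proj ⊤ g = f := by
    intro n
    induction n with
    | zero => intro J _ h; exact absurd h (Nat.not_lt_zero _)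
    | succ n ih =>
        intro J hJI hrank hgood
        by_cases hb : J = ⊥
        · exact final (hb ▸ hgood)
        · obtain ⟨J', hJ'I, hlt, hgood'⟩ := step J hJI hb hgood
          exact ih J' hJ'I (by omega) hgood'
  exact main (Module.finrank K P + 1) I le_rfl
    (Nat.lt_succ_of_le (Submodule.finrank_le _)) base
end

section
/- Let ε₀ ∈ U(1) and E₀ a diagonal r×r unitary matrix with ε₀² = det E₀. Then there exist sequences (Sₙ) of natural numbers and (Dₙ) of real diagonal r×r matrices such that Sₙ → +∞, Dₙ → 0, exp(2πi Dₙ) = E₀^{Sₙ}, and e^{πi·tr Dₙ} = ε₀^{Sₙ} for all n. -/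
open Filter Real


lemma key_approx {ι : Type*} [Fintype ι] (z : ι → ℂ) (hz : ∀ i, ‖z i‖ = 1)
    (ε : ℝ) (hε : 0 < ε) (M : ℕ) (_hM : 0 < M) :
    ∃ S : ℕ, M ≤ S ∧ ∀ i, ‖z i ^ S - 1‖ < ε := by
  set f : ℕ → ι → ℂ := fun t i => z i ^ (M * (t + 1)) with hf
  have hb : Bornology.IsBounded (Set.range f) := by
    rw [Metric.isBounded_iff]
    refine ⟨2, ?_⟩
    rintro x ⟨t, rfl⟩ y ⟨s, rfl⟩
    rw [dist_pi_le_iff (by norm_num)]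
    intro i
    calc dist (f t i) (f s i) ≤ ‖f t i‖ + ‖f s i‖ := by
          simpa [Complex.dist_eq] using norm_sub_le (f t i) (f s i)
      _ ≤ 2 := by simp [hf, norm_pow, hz i]; norm_num
  obtain ⟨a, -, φ, hφ, hconv⟩ := tendsto_subseq_of_bounded hb (fun n => Set.mem_range_self (f := f) n)
  have hc : CauchySeq (f ∘ φ) := hconv.cauchySeq
  rw [Metric.cauchySeq_iff] at hc
  obtain ⟨N, hN⟩ := hc ε hε
  have hlt : φ N < φ (N + 1) := hφ (by omega)
  obtain ⟨d, hd, hd1⟩ : ∃ d, φ (N + 1) = φ N + d ∧ 1 ≤ d := ⟨φ (N + 1) - φ N, by omega, by omega⟩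
  refine ⟨M * d, Nat.le_mul_of_pos_right M (by omega), fun i => ?_⟩
  have hdd := hN (N + 1) (by omega) N (by omega)
  have hdi : dist (f (φ (N+1)) i) (f (φ N) i) < ε :=
    lt_of_le_of_lt (dist_le_pi_dist (f (φ (N+1))) (f (φ N)) i) hdd
  have key : f (φ (N+1)) i = f (φ N) i * z i ^ (M * d) := by
    rw [hf]; dsimp only; rw [← pow_add, hd]; ring_nf
  have hz1 : ‖f (φ N) i‖ = 1 := by simp [hf, norm_pow, hz i]
  calc ‖z i ^ (M * d) - 1‖
      = ‖f (φ N) i‖ * ‖z i ^ (M * d) - 1‖ := by rw [hz1, one_mul]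
    _ = ‖f (φ (N+1)) i - f (φ N) i‖ := by rw [← norm_mul, key]; ring_nf
    _ < ε := by rwa [Complex.dist_eq] at hdi

lemma exp_arg_eq {w : ℂ} (hw : ‖w‖ = 1) :
    Complex.exp ((Complex.arg w : ℂ) * Complex.I) = w := by
  have := Complex.norm_mul_exp_arg_mul_I w
  rwa [hw, Complex.ofReal_one, one_mul] at this

/-- Lemma 5.1 (Dirichlet argument): for `ε₀ ∈ U(1)` and a diagonal unitary matrix
`E₀ = diag(e₁,…,e_r)` with `ε₀² = det E₀`, there are sequences `(Sₙ)` of natural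
numbers and `(Dₙ)` of real diagonal matrices (given by their diagonal entries)
with `Sₙ → ∞`, `Dₙ → 0`, `exp(2πi Dₙ) = E₀^{Sₙ}` entrywise and
`e^{πi tr Dₙ} = ε₀^{Sₙ}`. -/
theorem stmt_5 (r : ℕ) (ε₀ : ℂ) (hε₀ : ‖ε₀‖ = 1)
    (E₀ : Fin r → ℂ) (hE₀ : ∀ j, ‖E₀ j‖ = 1)
    (hdet : ε₀ ^ 2 = ∏ j, E₀ j) :
    ∃ (S : ℕ → ℕ) (D : ℕ → (Fin r → ℝ)),
      Tendsto S atTop atTop ∧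
      Tendsto D atTop (nhds 0) ∧
      (∀ n j, Complex.exp (2 * (π : ℂ) * Complex.I * (D n j : ℂ)) = (E₀ j) ^ (S n)) ∧
      (∀ n, Complex.exp ((π : ℂ) * Complex.I * ((∑ j, D n j : ℝ) : ℂ)) = ε₀ ^ (S n)) := by
  have hε₀ne : ε₀ ≠ 0 := by intro h; rw [h] at hε₀; simp at hε₀
  have hE0ne : ∀ j, E₀ j ≠ 0 := by intro j h; have := hE₀ j; rw [h] at this; simp at this
  set u : Fin r → ℂ := fun j => Complex.exp (Complex.log (E₀ j) / 2) with hu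
  have hu2 : ∀ j, (u j) ^ 2 = E₀ j := by
    intro j
    rw [hu]
    dsimp only
    rw [sq, ← Complex.exp_add]
    rw [show Complex.log (E₀ j) / 2 + Complex.log (E₀ j) / 2 = Complex.log (E₀ j) by ring]
    exact Complex.exp_log (hE0ne j)
  have huabs : ∀ j, ‖u j‖ = 1 := by
    intro j
    rw [hu]
    dsimp only
    rw [Complex.norm_exp]
    have : (Complex.log (E₀ j) / 2).re = (Complex.log (E₀ j)).re / 2 := by
      simp [Complex.div_ofNat_re]
    rw [this, Complex.log_re, hE₀ j]
    simp
  set u0 : ℂ := (∏ j, u j) / ε₀ with hu0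
  have hu0abs : ‖u0‖ = 1 := by
    rw [hu0, norm_div, norm_prod, hε₀]
    simp [huabs]
  have hprod : ∏ j, u j = ε₀ * u0 := by
    rw [hu0]; field_simp
  have hu0sq : u0 ^ 2 = 1 := by
    rw [hu0, div_pow, ← Finset.prod_pow]
    simp_rw [hu2]
    rw [← hdet]
    field_simp
  have hu0pm : u0 = 1 ∨ u0 = -1 := by
    have h := hu0sq
    rw [sq] at h
    exact mul_self_eq_one_iff.mp h
  -- choose S
  have hkey : ∀ n : ℕ, ∃ S : ℕ, n + 1 ≤ S ∧ ‖u0 ^ S - 1‖ < 1 / (n + 1) ∧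
      ∀ j, ‖u j ^ S - 1‖ < 1 / (n + 1) := by
    intro n
    obtain ⟨S, hS1, hS2⟩ := key_approx (ι := Unit ⊕ Fin r) (Sum.elim (fun _ => u0) u)
      (by rintro (i | j) <;> simp [hu0abs, huabs]) (1 / (n + 1)) (by positivity) (n + 1) (by omega)
    exact ⟨S, hS1, by simpa using hS2 (Sum.inl ()), fun j => by simpa using hS2 (Sum.inr j)⟩
  choose S hS hS0 hSu using hkey
  have hSge : ∀ n, n ≤ S n := fun n => le_trans (by omega) (hS n)
  have hu0S : ∀ n, u0 ^ S n = 1 := by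
    intro n
    rcases hu0pm with h1 | h1
    · rw [h1, one_pow]
    · rcases Nat.even_or_odd (S n) with he | ho
      · rw [h1, he.neg_one_pow]
      · exfalso
        have := hS0 n
        rw [h1, ho.neg_one_pow] at this
        have h2 : ‖(-1 : ℂ) - 1‖ = 2 := by norm_num
        rw [h2] at this
        have : (1 : ℝ) / (n + 1) ≤ 1 := by
          rw [div_le_one (by positivity)]; linarith
        linarith
  refine ⟨S, fun n j => Complex.arg (u j ^ S n) / π, ?_, ?_, ?_, ?_⟩
  · exact tendsto_atTop_mono hSge tendsto_id
  · rw [tendsto_pi_nhds]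
    intro j
    have hlim : Tendsto (fun n => u j ^ S n) atTop (nhds 1) := by
      rw [tendsto_iff_dist_tendsto_zero]
      apply squeeze_zero (fun n => dist_nonneg) (fun n => ?_)
        (by exact tendsto_one_div_add_atTop_nhds_zero_nat)
      rw [Complex.dist_eq]
      exact (hSu n j).le
    have harg : Tendsto (fun n => Complex.arg (u j ^ S n)) atTop (nhds 0) := by
      have hc : ContinuousAt Complex.arg 1 := Complex.continuousAt_arg Complex.one_mem_slitPlane
      have := hc.tendsto.comp hlim
      simpa [Complex.arg_one, Function.comp_def] using this
    have := harg.div_const π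
    simpa using this
  · intro n j
    have habs : ‖u j ^ S n‖ = 1 := by rw [norm_pow, huabs, one_pow]
    have hrw : (2 : ℂ) * π * Complex.I * ((Complex.arg (u j ^ S n) / π : ℝ) : ℂ)
        = 2 * ((Complex.arg (u j ^ S n) : ℂ) * Complex.I) := by
      push_cast
      have hπ : (π : ℂ) ≠ 0 := by exact_mod_cast Real.pi_ne_zero
      field_simp
    rw [hrw, two_mul, Complex.exp_add, exp_arg_eq habs, ← sq, ← pow_mul, mul_comm (S n) 2, pow_mul, hu2]
  · intro n
    have habs : ∀ j, ‖u j ^ S n‖ = 1 := fun j => by rw [norm_pow, huabs, one_pow]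
    have hrw : (π : ℂ) * Complex.I * ((∑ j, Complex.arg (u j ^ S n) / π : ℝ) : ℂ)
        = ∑ j, (Complex.arg (u j ^ S n) : ℂ) * Complex.I := by
      push_cast
      rw [Finset.mul_sum]
      congr 1
      ext j
      have hπ : (π : ℂ) ≠ 0 := by exact_mod_cast Real.pi_ne_zero
      field_simp
    rw [hrw, Complex.exp_sum]
    have : ∀ j ∈ Finset.univ, Complex.exp ((Complex.arg (u j ^ S n) : ℂ) * Complex.I) = u j ^ S n :=
      fun j _ => exp_arg_eq (habs j)
    rw [Finset.prod_congr rfl this, Finset.prod_pow, hprod, mul_pow, hu0S n, mul_one]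
end
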